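/- Let H be a complex Hilbert space, let A be a Hilbert–Schmidt operator on H, and let 0 ≤ ν ≤ 1. Write ℜ_ν(A) = νA + (1-ν)A* and ℑ_ν(A) = ν(-iA) + (1-ν)(iA*), and let T denote the block operator [[0, ℜ_ν(A)],[ℑ_ν(A), 0]] on H ⊕ H. Then ((1 + |1 - 2ν|)/√2) · w_{(2,ν)}(A) ≤ w_{(2,ν)}(T) ≤ √2 · w_{(2,ν)}(A). -/

import Mathlib

variable {H : Type*} [NormedAddCommGroup H] [InnerProductSpace ℂ H] [CompleteSpace H]

/-- The operator `ν e^{iθ} A + (1-ν) e^{-iθ} A*`. -/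
noncomputable def weightedPart {E : Type*} [NormedAddCommGroup E] [InnerProductSpace ℂ E]
    [CompleteSpace E] (ν θ : ℝ) (A : E →L[ℂ] E) : E →L[ℂ] E :=
  ((ν : ℂ) * Complex.exp (θ * Complex.I)) • A +
    (((1 - ν : ℝ) : ℂ) * Complex.exp (-(θ * Complex.I))) • ContinuousLinearMap.adjoint A

/-- The Hilbert–Schmidt norm `‖A‖₂ = √(∑ᵢ ‖A eᵢ‖²)` computed w.r.t. a Hilbert basis `e`. -/
noncomputable def hsNorm {E : Type*} [NormedAddCommGroup E] [InnerProductSpace ℂ E]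
    {ι : Type*} (e : HilbertBasis ι ℂ E) (A : E →L[ℂ] E) : ℝ :=
  Real.sqrt (∑' i, ‖A (e i)‖ ^ 2)

/-- The trace `tr(T) = ∑ᵢ ⟨eᵢ, T eᵢ⟩` computed w.r.t. a Hilbert basis `e`. -/
noncomputable def trBasis {E : Type*} [NormedAddCommGroup E] [InnerProductSpace ℂ E]
    {ι : Type*} (e : HilbertBasis ι ℂ E) (T : E →L[ℂ] E) : ℂ :=
  ∑' i, (inner ℂ (e i) (T (e i)) : ℂ)

/-- The weighted Hilbert–Schmidt numerical radius
`w_{(2,ν)}(A) = sup_{θ ∈ ℝ} ‖ν e^{iθ} A + (1-ν) e^{-iθ} A*‖₂`. -/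
noncomputable def wHS {E : Type*} [NormedAddCommGroup E] [InnerProductSpace ℂ E]
    [CompleteSpace E] {ι : Type*} (e : HilbertBasis ι ℂ E) (ν : ℝ) (A : E →L[ℂ] E) : ℝ :=
  ⨆ θ : ℝ, hsNorm e (weightedPart ν θ A)

/-- The block operator `[[X, Y],[Z, W]]` on the Hilbert space direct sum `H ⊕₂ H`,
mapping `(x, y)` to `(Xx + Yy, Zx + Wy)`. -/
noncomputable def blockOp (X Y Z W : H →L[ℂ] H) :
    WithLp 2 (H × H) →L[ℂ] WithLp 2 (H × H) :=
  ((WithLp.prodContinuousLinearEquiv 2 ℂ H H).symm.toContinuousLinearMap).comp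
    ((((X.comp (ContinuousLinearMap.fst ℂ H H)) + (Y.comp (ContinuousLinearMap.snd ℂ H H))).prod
      ((Z.comp (ContinuousLinearMap.fst ℂ H H)) + (W.comp (ContinuousLinearMap.snd ℂ H H)))).comp
      (WithLp.prodContinuousLinearEquiv 2 ℂ H H).toContinuousLinearMap)

/-!
Write `W_φ(A) = ν e^{iφ} A + (1-ν) e^{-iφ} A*`. For `T = [[0, ℜ_ν A], [ℑ_ν A, 0]]` the operator
`W_θ(T)` is again off-diagonal, with entries `B` and `C`, so `‖W_θ T‖₂² = ‖B‖₂² + ‖C‖₂²`. By the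
parallelogram law this is `(‖B + iC‖₂² + ‖B - iC‖₂²) / 2`, and a direct computation gives
`B + iC = 2ν e^{iπ/4} W_{θ-π/4}(A)` and `B - iC = (2(1-ν) e^{iπ/4} W_{-θ-π/4}(A))*`. Hence
`‖W_θ T‖₂² = 2ν² ‖W_{θ-π/4} A‖₂² + 2(1-ν)² ‖W_{-θ-π/4} A‖₂²`.
Bounding both norms on the right by `w_{(2,ν)}(A)` gives the upper bound, since
`ν² + (1-ν)² ≤ 1`; choosing `θ` so that one of the two angles is any prescribed `φ` gives the
lower bound `√2 max(ν, 1-ν) = (1 + |1-2ν|)/√2`.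
-/

open scoped ENNReal InnerProductSpace Real
open ContinuousLinearMap

theorem HilbertBasis.tsum_enorm_inner_sq {E ι : Type*} [NormedAddCommGroup E]
    [InnerProductSpace ℂ E] (b : HilbertBasis ι ℂ E) (x : E) :
    ∑' i, ‖⟪b i, x⟫_ℂ‖ₑ ^ 2 = ‖x‖ₑ ^ 2 := by
  have h := lp.hasSum_norm (p := 2) (by norm_num) (b.repr x)
  simp only [ENNReal.toReal_ofNat, Real.rpow_two, b.repr_apply_apply,
    LinearIsometryEquiv.norm_map] at h
  simp only [← ofReal_norm, ← ENNReal.ofReal_pow (norm_nonneg _)]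
  rw [← ENNReal.ofReal_tsum_of_nonneg (fun _ => by positivity) h.summable, h.tsum_eq]

section HilbertSchmidt

variable {ι κ E F G : Type*} [NormedAddCommGroup E] [InnerProductSpace ℂ E]
  [NormedAddCommGroup F] [InnerProductSpace ℂ F] [NormedAddCommGroup G] [InnerProductSpace ℂ G]

/-- The squared Hilbert–Schmidt norm, valued in `ℝ≥0∞` so that it needs no summability
hypothesis (unlike `hsNorm`, which silently takes the value `0` on non-summable families). -/
noncomputable def hsENormSq (e : HilbertBasis ι ℂ E) (T : E →L[ℂ] F) : ℝ≥0∞ :=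
  ∑' i, ‖T (e i)‖ₑ ^ 2

theorem hsNorm_eq_sqrt_toReal (e : HilbertBasis ι ℂ E) (T : E →L[ℂ] E) :
    hsNorm e T = √(hsENormSq e T).toReal := by
  rw [hsNorm, hsENormSq, ENNReal.tsum_toReal_eq fun _ => by finiteness]
  simp

theorem hsNorm_nonneg (e : HilbertBasis ι ℂ E) (T : E →L[ℂ] E) : 0 ≤ hsNorm e T :=
  Real.sqrt_nonneg _

theorem hsNorm_sq (e : HilbertBasis ι ℂ E) (T : E →L[ℂ] E) :
    hsNorm e T ^ 2 = (hsENormSq e T).toReal := by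
  rw [hsNorm_eq_sqrt_toReal, Real.sq_sqrt ENNReal.toReal_nonneg]

theorem hsENormSq_ne_top_of_summable {e : HilbertBasis ι ℂ E} {T : E →L[ℂ] F}
    (hT : Summable fun i => ‖T (e i)‖ ^ 2) : hsENormSq e T ≠ ⊤ := by
  simp only [hsENormSq, ← ofReal_norm, ← ENNReal.ofReal_pow (norm_nonneg _)]
  rw [← ENNReal.ofReal_tsum_of_nonneg (fun _ => by positivity) hT]
  exact ENNReal.ofReal_ne_top

theorem hsENormSq_smul (e : HilbertBasis ι ℂ E) (c : ℂ) (T : E →L[ℂ] F) :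
    hsENormSq e (c • T) = ‖c‖ₑ ^ 2 * hsENormSq e T := by
  simp only [hsENormSq, smul_apply, enorm_smul, mul_pow, ENNReal.tsum_mul_left]

theorem enorm_add_sq_add_enorm_sub_sq (x y : E) :
    ‖x + y‖ₑ ^ 2 + ‖x - y‖ₑ ^ 2 = 2 * ‖x‖ₑ ^ 2 + 2 * ‖y‖ₑ ^ 2 := by
  simp only [← ofReal_norm, ← ENNReal.ofReal_pow (norm_nonneg _)]
  rw [← ENNReal.ofReal_add (by positivity) (by positivity), ← ENNReal.ofReal_ofNat 2,
    ← ENNReal.ofReal_mul zero_le_two, ← ENNReal.ofReal_mul zero_le_two,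
    ← ENNReal.ofReal_add (by positivity) (by positivity),
    parallelogram_law_with_norm ℂ x y]
  ring_nf

theorem hsENormSq_add_add_sub (e : HilbertBasis ι ℂ E) (X Y : E →L[ℂ] F) :
    hsENormSq e (X + Y) + hsENormSq e (X - Y) = 2 * hsENormSq e X + 2 * hsENormSq e Y := by
  simp only [hsENormSq, ← ENNReal.tsum_add, ← ENNReal.tsum_mul_left, add_apply, sub_apply,
    enorm_add_sq_add_enorm_sub_sq]

theorem hsENormSq_add_le (e : HilbertBasis ι ℂ E) (X Y : E →L[ℂ] F) :
    hsENormSq e (X + Y) ≤ 2 * hsENormSq e X + 2 * hsENormSq e Y :=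
  hsENormSq_add_add_sub e X Y ▸ le_self_add

theorem hsENormSq_comp_of_isometry (e : HilbertBasis ι ℂ E) {L : F →L[ℂ] G}
    (hL : ∀ y, ‖L y‖ = ‖y‖) (T : E →L[ℂ] F) : hsENormSq e (L ∘L T) = hsENormSq e T := by
  simp only [hsENormSq, comp_apply, ← ofReal_norm, hL]

variable [CompleteSpace E] [CompleteSpace F]

/-- The Hilbert–Schmidt norm of `T` and of `T†` agree, whatever the bases: both sides are
`∑ᵢ ∑ⱼ |⟪fⱼ, T eᵢ⟫|²` summed in different orders. -/
theorem hsENormSq_adjoint (e : HilbertBasis ι ℂ E) (f : HilbertBasis κ ℂ F) (T : E →L[ℂ] F) :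
    hsENormSq f (adjoint T) = hsENormSq e T := by
  simp only [hsENormSq, ← f.tsum_enorm_inner_sq, ← e.tsum_enorm_inner_sq, adjoint_inner_right]
  rw [ENNReal.tsum_comm]
  simp only [← enorm_norm (⟪_, _⟫_ℂ), norm_inner_symm]

theorem hsENormSq_comp_of_isometry_adjoint [CompleteSpace G] (e : HilbertBasis ι ℂ E)
    (g : HilbertBasis κ ℂ G) (X : E →L[ℂ] F) {P : G →L[ℂ] E} (hP : ∀ x, ‖adjoint P x‖ = ‖x‖) :
    hsENormSq g (X ∘L P) = hsENormSq e X := by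
  obtain ⟨_, b, -⟩ := exists_hilbertBasis ℂ F
  rw [← hsENormSq_adjoint g b, adjoint_comp, hsENormSq_comp_of_isometry b hP,
    hsENormSq_adjoint e b]

end HilbertSchmidt

section WithLpProd

variable {E F : Type*} [NormedAddCommGroup E] [InnerProductSpace ℂ E] [CompleteSpace E]
  [NormedAddCommGroup F] [InnerProductSpace ℂ F] [CompleteSpace F]

theorem WithLp.adjoint_fstL_apply (x : E) :
    adjoint (WithLp.fstL 2 ℂ E F) x = WithLp.toLp 2 (x, 0) :=
  ext_inner_left ℂ fun v => by simp [adjoint_inner_right]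

theorem WithLp.adjoint_sndL_apply (y : F) :
    adjoint (WithLp.sndL 2 ℂ E F) y = WithLp.toLp 2 (0, y) :=
  ext_inner_left ℂ fun v => by simp [adjoint_inner_right]

end WithLpProd

omit [CompleteSpace H] in
@[simp] theorem blockOp_apply_fst (X Y Z W : H →L[ℂ] H) (v : WithLp 2 (H × H)) :
    (blockOp X Y Z W v).fst = X v.fst + Y v.snd := rfl

omit [CompleteSpace H] in
@[simp] theorem blockOp_apply_snd (X Y Z W : H →L[ℂ] H) (v : WithLp 2 (H × H)) :
    (blockOp X Y Z W v).snd = Z v.fst + W v.snd := rfl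

omit [CompleteSpace H] in
theorem blockOp_ext {S T : WithLp 2 (H × H) →L[ℂ] WithLp 2 (H × H)}
    (h₁ : ∀ v, (S v).fst = (T v).fst) (h₂ : ∀ v, (S v).snd = (T v).snd) : S = T :=
  ContinuousLinearMap.ext fun v => WithLp.ofLp_injective 2 (Prod.ext (h₁ v) (h₂ v))

omit [CompleteSpace H] in
theorem smul_blockOp (c : ℂ) (X Y Z W : H →L[ℂ] H) :
    c • blockOp X Y Z W = blockOp (c • X) (c • Y) (c • Z) (c • W) :=
  blockOp_ext (fun v => by simp) (fun v => by simp)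

omit [CompleteSpace H] in
theorem blockOp_add_blockOp (X Y Z W X' Y' Z' W' : H →L[ℂ] H) :
    blockOp X Y Z W + blockOp X' Y' Z' W' = blockOp (X + X') (Y + Y') (Z + Z') (W + W') :=
  blockOp_ext (fun v => by simp; abel) (fun v => by simp; abel)

theorem adjoint_blockOp (X Y Z W : H →L[ℂ] H) :
    adjoint (blockOp X Y Z W) = blockOp (adjoint X) (adjoint Z) (adjoint Y) (adjoint W) := by
  refine ((eq_adjoint_iff _ _).2 fun v w => ?_).symm
  simp [adjoint_inner_left, inner_add_left, inner_add_right]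
  ring

omit [CompleteSpace H] in
theorem enorm_blockOp_apply_sq (B C : H →L[ℂ] H) (v : WithLp 2 (H × H)) :
    ‖blockOp 0 B C 0 v‖ₑ ^ 2
      = ‖(B ∘L WithLp.sndL 2 ℂ H H) v‖ₑ ^ 2 + ‖(C ∘L WithLp.fstL 2 ℂ H H) v‖ₑ ^ 2 := by
  simp only [← ofReal_norm, ← ENNReal.ofReal_pow (norm_nonneg _),
    ← ENNReal.ofReal_add (sq_nonneg _) (sq_nonneg _), WithLp.prod_norm_sq_eq_of_L2]
  simp

theorem hsENormSq_blockOp {ι κ : Type*} (e : HilbertBasis ι ℂ H)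
    (f : HilbertBasis κ ℂ (WithLp 2 (H × H))) (B C : H →L[ℂ] H) :
    hsENormSq f (blockOp 0 B C 0) = hsENormSq e B + hsENormSq e C := by
  have hB := hsENormSq_comp_of_isometry_adjoint e f B (P := WithLp.sndL 2 ℂ H H)
    fun y => by simp [WithLp.adjoint_sndL_apply]
  have hC := hsENormSq_comp_of_isometry_adjoint e f C (P := WithLp.fstL 2 ℂ H H)
    fun x => by simp [WithLp.adjoint_fstL_apply]
  rw [← hB, ← hC, hsENormSq, hsENormSq, hsENormSq, ← ENNReal.tsum_add]
  simp only [enorm_blockOp_apply_sq]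

section WeightedParts

variable {E : Type*} [NormedAddCommGroup E] [InnerProductSpace ℂ E] [CompleteSpace E]

open Complex

noncomputable def weightedPart₂ (ν θ : ℝ) (S T : E →L[ℂ] E) : E →L[ℂ] E :=
  ((ν : ℂ) * exp (θ * I)) • S + (((1 - ν : ℝ) : ℂ) * exp (-(θ * I))) • adjoint T

noncomputable def weightedRe (ν : ℝ) (A : E →L[ℂ] E) : E →L[ℂ] E :=
  (ν : ℂ) • A + ((1 - ν : ℝ) : ℂ) • adjoint A

noncomputable def weightedIm (ν : ℝ) (A : E →L[ℂ] E) : E →L[ℂ] E :=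
  (-I * (ν : ℂ)) • A + (I * ((1 - ν : ℝ) : ℂ)) • adjoint A

theorem exp_pi_div_four_smul_weightedPart (ν θ : ℝ) (A : E →L[ℂ] E) :
    exp (↑(π / 4) * I) • weightedPart ν (θ - π / 4) A
      = ((ν : ℂ) * exp (θ * I)) • A + (I * ((1 - ν : ℝ) : ℂ) * exp (-(θ * I))) • adjoint A := by
  have h₁ : exp (↑(π / 4) * I) * exp (↑(θ - π / 4) * I) = exp (θ * I) := by
    rw [← exp_add]; push_cast; ring_nf
  have h₂ : exp (↑(π / 4) * I) * exp (-(↑(θ - π / 4) * I)) = I * exp (-(θ * I)) := by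
    rw [← exp_add, show ↑(π / 4) * I + -(↑(θ - π / 4) * I) = π / 2 * I + -(θ * I) by
      push_cast; ring, exp_add, exp_pi_div_two_mul_I]
  rw [weightedPart, smul_add, smul_smul, smul_smul, mul_left_comm, h₁, mul_left_comm, h₂]
  ring_nf

theorem weightedPart₂_add_I_smul (ν θ : ℝ) (A : E →L[ℂ] E) :
    weightedPart₂ ν θ (weightedRe ν A) (weightedIm ν A)
        + I • weightedPart₂ ν θ (weightedIm ν A) (weightedRe ν A)
      = (2 * (ν : ℂ) * exp (↑(π / 4) * I)) • weightedPart ν (θ - π / 4) A := by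
  rw [mul_smul, exp_pi_div_four_smul_weightedPart]
  simp only [weightedPart₂, weightedRe, weightedIm, map_add, map_smulₛₗ, adjoint_adjoint,
    map_mul, map_neg, conj_I, conj_ofReal]
  match_scalars <;> ring_nf <;> simp only [I_sq] <;> ring

theorem weightedPart₂_sub_I_smul (ν θ : ℝ) (A : E →L[ℂ] E) :
    weightedPart₂ ν θ (weightedRe ν A) (weightedIm ν A)
        - I • weightedPart₂ ν θ (weightedIm ν A) (weightedRe ν A)
      = adjoint
          ((2 * ((1 - ν : ℝ) : ℂ) * exp (↑(π / 4) * I)) • weightedPart ν (-θ - π / 4) A) := by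
  rw [mul_smul, exp_pi_div_four_smul_weightedPart]
  simp only [weightedPart₂, weightedRe, weightedIm, map_add, map_smulₛₗ, adjoint_adjoint,
    map_mul, map_neg, map_ofNat, conj_I, conj_ofReal, ← exp_conj]
  match_scalars <;> ring_nf <;> simp only [I_sq] <;> ring

end WeightedParts

section WeightedHS

variable {ι κ E : Type*} [NormedAddCommGroup E] [InnerProductSpace ℂ E] [CompleteSpace E]

theorem hsENormSq_weightedPart_le (e : HilbertBasis ι ℂ E) (ν θ : ℝ) (A : E →L[ℂ] E) :
    hsENormSq e (weightedPart ν θ A)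
      ≤ 2 * (‖(ν : ℂ)‖ₑ ^ 2 + ‖((1 - ν : ℝ) : ℂ)‖ₑ ^ 2) * hsENormSq e A := by
  rw [weightedPart]
  refine (hsENormSq_add_le e _ _).trans_eq ?_
  rw [hsENormSq_smul, hsENormSq_smul, hsENormSq_adjoint e e, enorm_mul, enorm_mul, ← neg_mul,
    ← Complex.ofReal_neg, Complex.enorm_exp_ofReal_mul_I, Complex.enorm_exp_ofReal_mul_I]
  ring

theorem hsENormSq_weightedPart_ne_top {e : HilbertBasis ι ℂ E} {A : E →L[ℂ] E}
    (hA : hsENormSq e A ≠ ⊤) (ν θ : ℝ) : hsENormSq e (weightedPart ν θ A) ≠ ⊤ :=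
  ne_top_of_le_ne_top (by finiteness) (hsENormSq_weightedPart_le e ν θ A)

theorem bddAbove_range_hsNorm_weightedPart {e : HilbertBasis ι ℂ E} {A : E →L[ℂ] E}
    (hA : hsENormSq e A ≠ ⊤) (ν : ℝ) :
    BddAbove (Set.range fun θ => hsNorm e (weightedPart ν θ A)) := by
  refine ⟨√(2 * (‖(ν : ℂ)‖ₑ ^ 2 + ‖((1 - ν : ℝ) : ℂ)‖ₑ ^ 2) * hsENormSq e A).toReal,
    Set.forall_mem_range.2 fun θ => ?_⟩
  rw [hsNorm_eq_sqrt_toReal]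
  exact Real.sqrt_le_sqrt
    (ENNReal.toReal_mono (by finiteness) (hsENormSq_weightedPart_le e ν θ A))

end WeightedHS

theorem weightedPart_blockOp (ν θ : ℝ) (Y Z : H →L[ℂ] H) :
    weightedPart ν θ (blockOp 0 Y Z 0)
      = blockOp 0 (weightedPart₂ ν θ Y Z) (weightedPart₂ ν θ Z Y) 0 := by
  rw [weightedPart, adjoint_blockOp, smul_blockOp, smul_blockOp, blockOp_add_blockOp]
  simp [weightedPart₂]

open Complex in
theorem two_mul_hsENormSq_weightedPart_blockOp {ι κ : Type*} (e : HilbertBasis ι ℂ H)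
    (f : HilbertBasis κ ℂ (WithLp 2 (H × H))) (ν θ : ℝ) (A : H →L[ℂ] H) :
    2 * hsENormSq f (weightedPart ν θ (blockOp 0 (weightedRe ν A) (weightedIm ν A) 0))
      = ‖2 * (ν : ℂ)‖ₑ ^ 2 * hsENormSq e (weightedPart ν (θ - π / 4) A)
        + ‖2 * ((1 - ν : ℝ) : ℂ)‖ₑ ^ 2 * hsENormSq e (weightedPart ν (-θ - π / 4) A) := by
  have hI (C : H →L[ℂ] H) : hsENormSq e (I • C) = hsENormSq e C := by
    rw [hsENormSq_smul, ← ofReal_norm, norm_I, ENNReal.ofReal_one, one_pow, one_mul]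
  rw [weightedPart_blockOp, hsENormSq_blockOp e f, mul_add,
    ← hI (weightedPart₂ ν θ (weightedIm ν A) (weightedRe ν A)), ← hsENormSq_add_add_sub,
    weightedPart₂_add_I_smul, weightedPart₂_sub_I_smul, hsENormSq_adjoint e e,
    hsENormSq_smul, hsENormSq_smul]
  simp only [enorm_mul, enorm_exp_ofReal_mul_I, mul_one]

theorem hsNorm_weightedPart_blockOp_sq {ι κ : Type*} (e : HilbertBasis ι ℂ H)
    (f : HilbertBasis κ ℂ (WithLp 2 (H × H))) (ν θ : ℝ) {A : H →L[ℂ] H}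
    (hA : hsENormSq e A ≠ ⊤) :
    hsNorm f (weightedPart ν θ (blockOp 0 (weightedRe ν A) (weightedIm ν A) 0)) ^ 2
      = 2 * ν ^ 2 * hsNorm e (weightedPart ν (θ - π / 4) A) ^ 2
        + 2 * (1 - ν) ^ 2 * hsNorm e (weightedPart ν (-θ - π / 4) A) ^ 2 := by
  have h := congrArg ENNReal.toReal (two_mul_hsENormSq_weightedPart_blockOp e f ν θ A)
  have hfin (φ : ℝ) (c : ℂ) : ‖c‖ₑ ^ 2 * hsENormSq e (weightedPart ν φ A) ≠ ⊤ :=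
    ENNReal.mul_ne_top (by finiteness) (hsENormSq_weightedPart_ne_top hA ν φ)
  rw [ENNReal.toReal_add (hfin _ _) (hfin _ _)] at h
  simp only [ENNReal.toReal_mul, ENNReal.toReal_pow, toReal_enorm, ENNReal.toReal_ofNat,
    ← hsNorm_sq, norm_mul, Complex.norm_ofNat, Complex.norm_real, Real.norm_eq_abs, mul_pow,
    sq_abs] at h
  linarith

theorem max_mul_ciSup_le_and_ciSup_le_of_sq_eq {F G : ℝ → ℝ} {a b c : ℝ} (ha : 0 ≤ a)
    (hb : 0 ≤ b) (hF : ∀ φ, 0 ≤ F φ) (hFbdd : BddAbove (Set.range F)) (hG : ∀ θ, 0 ≤ G θ)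
    (hGF : ∀ θ, G θ ^ 2 = a ^ 2 * F (θ - c) ^ 2 + b ^ 2 * F (-θ - c) ^ 2) :
    max a b * ⨆ φ, F φ ≤ ⨆ θ, G θ ∧ ⨆ θ, G θ ≤ √(a ^ 2 + b ^ 2) * ⨆ φ, F φ := by
  set s := ⨆ φ, F φ
  have hFs (φ : ℝ) : F φ ^ 2 ≤ s ^ 2 := pow_le_pow_left₀ (hF φ) (le_ciSup hFbdd φ) 2
  have hs : 0 ≤ s := (hF 0).trans (le_ciSup hFbdd 0)
  have hGle (θ : ℝ) : G θ ≤ √(a ^ 2 + b ^ 2) * s := by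
    rw [← pow_le_pow_iff_left₀ (hG θ) (by positivity) two_ne_zero, mul_pow,
      Real.sq_sqrt (by positivity), hGF]
    nlinarith [hFs (θ - c), hFs (-θ - c), sq_nonneg a, sq_nonneg b]
  have hGbdd : BddAbove (Set.range G) := ⟨_, Set.forall_mem_range.2 hGle⟩
  refine ⟨?_, ciSup_le hGle⟩
  rw [Real.mul_iSup_of_nonneg (le_max_of_le_left ha)]
  refine ciSup_le fun φ => ?_
  have hGa : a * F φ ≤ G (φ + c) := by
    rw [← pow_le_pow_iff_left₀ (mul_nonneg ha (hF φ)) (hG _) two_ne_zero, hGF,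
      add_sub_cancel_right]
    nlinarith [sq_nonneg (b * F (-(φ + c) - c))]
  have hGb : b * F φ ≤ G (-φ - c) := by
    rw [← pow_le_pow_iff_left₀ (mul_nonneg hb (hF φ)) (hG _) two_ne_zero, hGF,
      show -(-φ - c) - c = φ by ring]
    nlinarith [sq_nonneg (a * F (-φ - c - c))]
  rw [max_mul_of_nonneg _ _ (hF φ)]
  exact max_le (hGa.trans (le_ciSup hGbdd _)) (hGb.trans (le_ciSup hGbdd _))

theorem one_add_abs_one_sub_two_mul_div_sqrt_two (ν : ℝ) :
    (1 + |1 - 2 * ν|) / √2 = max (√2 * ν) (√2 * (1 - ν)) := by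
  have h2 : √2 * √2 = 2 := Real.mul_self_sqrt zero_le_two
  rw [div_eq_iff (by positivity), ← mul_max_of_nonneg _ _ (Real.sqrt_nonneg 2)]
  rcases le_total ν (1 / 2) with h | h
  · rw [abs_of_nonneg (by linarith), max_eq_right (by linarith)]
    linear_combination (ν - 1) * h2
  · rw [abs_of_nonpos (by linarith), max_eq_left (by linarith)]
    linear_combination -ν * h2

theorem stmt18 {ι κ : Type*} (e : HilbertBasis ι ℂ H)
    (f : HilbertBasis κ ℂ (WithLp 2 (H × H)))
    (A : H →L[ℂ] H) (hA : Summable fun i => ‖A (e i)‖ ^ 2)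
    (ν : ℝ) (hν₀ : 0 ≤ ν) (hν₁ : ν ≤ 1) :
    (1 + |1 - 2 * ν|) / Real.sqrt 2 * wHS e ν A ≤
        wHS f ν (blockOp 0
          ((ν : ℂ) • A + ((1 - ν : ℝ) : ℂ) • ContinuousLinearMap.adjoint A)
          ((-(Complex.I) * (ν : ℂ)) • A +
            (Complex.I * ((1 - ν : ℝ) : ℂ)) • ContinuousLinearMap.adjoint A) 0) ∧
      wHS f ν (blockOp 0
          ((ν : ℂ) • A + ((1 - ν : ℝ) : ℂ) • ContinuousLinearMap.adjoint A)
          ((-(Complex.I) * (ν : ℂ)) • A +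
            (Complex.I * ((1 - ν : ℝ) : ℂ)) • ContinuousLinearMap.adjoint A) 0) ≤
        Real.sqrt 2 * wHS e ν A := by
  change _ * wHS e ν A ≤ wHS f ν (blockOp 0 (weightedRe ν A) (weightedIm ν A) 0) ∧
    wHS f ν (blockOp 0 (weightedRe ν A) (weightedIm ν A) 0) ≤ _
  have hA' := hsENormSq_ne_top_of_summable hA
  obtain ⟨hlower, hupper⟩ := max_mul_ciSup_le_and_ciSup_le_of_sq_eq
    (F := fun φ => hsNorm e (weightedPart ν φ A))
    (G := fun θ => hsNorm f (weightedPart ν θ (blockOp 0 (weightedRe ν A) (weightedIm ν A) 0)))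
    (mul_nonneg (Real.sqrt_nonneg 2) hν₀) (mul_nonneg (Real.sqrt_nonneg 2) (sub_nonneg.2 hν₁))
    (fun _ => hsNorm_nonneg _ _) (bddAbove_range_hsNorm_weightedPart hA' ν)
    (fun _ => hsNorm_nonneg _ _) fun θ => by
      rw [hsNorm_weightedPart_blockOp_sq e f ν θ hA', mul_pow, mul_pow, Real.sq_sqrt zero_le_two]
  refine ⟨(one_add_abs_one_sub_two_mul_div_sqrt_two ν).symm ▸ hlower, hupper.trans
    (mul_le_mul_of_nonneg_right ?_ (Real.iSup_nonneg fun _ => hsNorm_nonneg _ _))⟩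
  rw [mul_pow, mul_pow, Real.sq_sqrt zero_le_two]
  exact Real.sqrt_le_sqrt (by nlinarith)
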